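/- arXiv:1305.4424 — 5 statements merged into one kernel-verified Lean document; each statement's English description precedes it below -/
import Mathlib

section
/- Let f, g : ℝ → ℝ be smooth functions and κ a real parameter. For every twice continuously differentiable function ψ : ℝ³ → ℂ, the quantum constraint operators φ̂₁ψ = −i f(x) e^{κφ} ∂_θψ and φ̂₂ψ = −i g(x) ∂_φψ obey the non-anomalous commutation relation φ̂₁(φ̂₂ψ) − φ̂₂(φ̂₁ψ) = i κ g(x) (φ̂₁ψ), pointwise on ℝ³. -/
open Complex

/-- Partial derivative with respect to the first coordinate `θ` of a function on
`ℝ × ℝ × ℝ = {(θ, φ, x)}`. -/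
noncomputable def pdTheta (ψ : ℝ × ℝ × ℝ → ℂ) (q : ℝ × ℝ × ℝ) : ℂ :=
  deriv (fun t => ψ (t, q.2.1, q.2.2)) q.1

/-- Partial derivative with respect to the second coordinate `φ`. -/
noncomputable def pdPhi (ψ : ℝ × ℝ × ℝ → ℂ) (q : ℝ × ℝ × ℝ) : ℂ :=
  deriv (fun t => ψ (q.1, t, q.2.2)) q.2.1

/-- The quantum constraint operator `φ̂₁ = −i f(x) e^{κφ} ∂_θ`. -/
noncomputable def opPhi₁ (f : ℝ → ℝ) (κ : ℝ) (ψ : ℝ × ℝ × ℝ → ℂ) (q : ℝ × ℝ × ℝ) : ℂ :=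
  -Complex.I * (f q.2.2 : ℝ) * (Real.exp (κ * q.2.1) : ℝ) * pdTheta ψ q

/-- The quantum constraint operator `φ̂₂ = −i g(x) ∂_φ`. -/
noncomputable def opPhi₂ (g : ℝ → ℝ) (ψ : ℝ × ℝ × ℝ → ℂ) (q : ℝ × ℝ × ℝ) : ℂ :=
  -Complex.I * (g q.2.2 : ℝ) * pdPhi ψ q

/-- Case (ii): the quantum constraints `φ̂₁ = −i f(x)e^{κφ}∂_θ` and `φ̂₂ = −i g(x)∂_φ`
obey the non-anomalous commutation relation `[φ̂₁, φ̂₂] = i κ g(x) φ̂₁` pointwise on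
twice continuously differentiable wave functions. -/
theorem commutator_constraints_gauge_invariant_structure_function
    (f g : ℝ → ℝ) (κ : ℝ) (hf : ContDiff ℝ (⊤ : ℕ∞) f) (hg : ContDiff ℝ (⊤ : ℕ∞) g)
    (ψ : ℝ × ℝ × ℝ → ℂ) (hψ : ContDiff ℝ 2 ψ) (q : ℝ × ℝ × ℝ) :
    opPhi₁ f κ (opPhi₂ g ψ) q - opPhi₂ g (opPhi₁ f κ ψ) q
      = Complex.I * (κ : ℝ) * (g q.2.2 : ℝ) * opPhi₁ f κ ψ q := by
  obtain ⟨θ₀, φ₀, x₀⟩ := q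
  set F : ℝ × ℝ → ℂ := fun p => ψ (p.1, p.2, x₀) with hFdef
  have hF : ContDiff ℝ 2 F :=
    hψ.comp (contDiff_fst.prodMk (contDiff_snd.prodMk contDiff_const))
  have hFd : Differentiable ℝ F := hF.differentiable (by norm_num)
  set G := fderiv ℝ F with hGdef
  have hG : ContDiff ℝ 1 G := hF.fderiv_right (by norm_num)
  have hGd : Differentiable ℝ G := hG.differentiable one_ne_zero
  -- partial derivatives of ψ via G
  have hθ : ∀ a b, pdTheta ψ (a, b, x₀) = G (a, b) (1, 0) := by
    intro a b
    have h1 : HasDerivAt (fun t => F (t, b)) (G (a, b) (1, 0)) a := by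
      simpa [Function.comp_def] using (hFd (a, b)).hasFDerivAt.comp_hasDerivAt a
        ((hasDerivAt_id a).prodMk (hasDerivAt_const a b))
    simpa [pdTheta, hFdef] using h1.deriv
  have hφ : ∀ a b, pdPhi ψ (a, b, x₀) = G (a, b) (0, 1) := by
    intro a b
    have h1 : HasDerivAt (fun t => F (a, t)) (G (a, b) (0, 1)) b := by
      simpa [Function.comp_def] using (hFd (a, b)).hasFDerivAt.comp_hasDerivAt b
        ((hasDerivAt_const b a).prodMk (hasDerivAt_id b))
    simpa [pdPhi, hFdef] using h1.deriv
  set p₀ : ℝ × ℝ := (θ₀, φ₀) with hp₀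
  -- derivatives of G applied to fixed vectors
  have hGv : ∀ (v : ℝ × ℝ) (p : ℝ × ℝ),
      HasFDerivAt (fun y => G y v) ((fderiv ℝ G p).flip v) p := by
    intro v p
    simpa using (hGd p).hasFDerivAt.clm_apply (hasFDerivAt_const v p)
  have hmix1 : HasDerivAt (fun t => G (t, φ₀) (0, 1))
      (fderiv ℝ G p₀ (1, 0) (0, 1)) θ₀ := by
    simpa [Function.comp_def] using (hGv (0,1) p₀).comp_hasDerivAt θ₀
      ((hasDerivAt_id θ₀).prodMk (hasDerivAt_const θ₀ φ₀))
  have hmix2 : HasDerivAt (fun t => G (θ₀, t) (1, 0))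
      (fderiv ℝ G p₀ (0, 1) (1, 0)) φ₀ := by
    simpa [Function.comp_def] using (hGv (1,0) p₀).comp_hasDerivAt φ₀
      ((hasDerivAt_const φ₀ θ₀).prodMk (hasDerivAt_id φ₀))
  have hsym : fderiv ℝ G p₀ (1, 0) (0, 1) = fderiv ℝ G p₀ (0, 1) (1, 0) :=
    (hF.contDiffAt.isSymmSndFDerivAt (by norm_num)) (1, 0) (0, 1)
  -- term A : pdTheta of opPhi₂ ψ
  have hA : pdTheta (opPhi₂ g ψ) (θ₀, φ₀, x₀)
      = -Complex.I * (g x₀ : ℝ) * (fderiv ℝ G p₀ (1, 0) (0, 1)) := by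
    have h1 : (fun t => opPhi₂ g ψ (t, φ₀, x₀))
        = fun t => -Complex.I * (g x₀ : ℝ) * G (t, φ₀) (0, 1) := by
      funext t; simp [opPhi₂, hφ]
    have h2 := (hmix1.const_mul (-Complex.I * (g x₀ : ℝ))).deriv
    simpa [pdTheta, h1] using h2
  -- term B : pdPhi of opPhi₁ ψ
  have hexp : HasDerivAt (fun s : ℝ => ((Real.exp (κ * s) : ℝ) : ℂ))
      ((κ * Real.exp (κ * φ₀) : ℝ) : ℂ) φ₀ := by
    have : HasDerivAt (fun s : ℝ => Real.exp (κ * s)) (κ * Real.exp (κ * φ₀)) φ₀ := by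
      simpa [mul_comm, Function.comp_def] using (Real.hasDerivAt_exp (κ * φ₀)).comp φ₀
        ((hasDerivAt_id φ₀).const_mul κ)
    exact this.ofReal_comp
  have hB : pdPhi (opPhi₁ f κ ψ) (θ₀, φ₀, x₀)
      = -Complex.I * (f x₀ : ℝ) *
        (((κ * Real.exp (κ * φ₀) : ℝ) : ℂ) * G p₀ (1, 0)
          + ((Real.exp (κ * φ₀) : ℝ) : ℂ) * fderiv ℝ G p₀ (0, 1) (1, 0)) := by
    have h1 : (fun s => opPhi₁ f κ ψ (θ₀, s, x₀))
        = fun s => -Complex.I * (f x₀ : ℝ) *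
            (((Real.exp (κ * s) : ℝ) : ℂ) * G (θ₀, s) (1, 0)) := by
      funext s; simp [opPhi₁, hθ]; ring
    have h2 := ((hexp.mul hmix2).const_mul (-Complex.I * (f x₀ : ℝ))).deriv
    rw [pdPhi]; rw [show (θ₀, φ₀, x₀).1 = θ₀ from rfl]
    simp only [h1]
    simp only [Pi.mul_apply] at h2
    rw [h2]
  -- assemble
  simp only [opPhi₁, opPhi₂, hA, hB, hθ θ₀ φ₀, hsym]
  push_cast
  ring_nf
  rfl
end

section
/- Let f : ℝ → ℝ be continuous with f(x) > 0 for all x, κ a real parameter, and ε ∈ {1, −1}. Suppose ψ : ℝ³ → ℂ is continuous, for every fixed (φ, x) the map θ ↦ ψ(θ, φ, x) is differentiable with ∂_θψ(θ,φ,x) = −ε · ψ(θ,φ,x) / (f(x) e^{κφ}), and ψ is square integrable on ℝ³ (∫_{ℝ³} |ψ|² dθ dφ dx < ∞). Then ψ is identically zero. (Hence the deficiency equation φ̂₁ψ = ±iψ for the constraint operator φ̂₁ = −i f(x)e^{κφ}∂_θ has no nonzero L² solutions, so both deficiency indices of φ̂₁ are zero.) -/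
/-!
Along each line `(φ, x) = const` the equation is the linear ODE `g' = c g`, so
`‖ψ(θ, φ, x)‖² = ‖ψ(0, φ, x)‖² e^{2 Re c θ}`, and no nonzero multiple of an exponential is
integrable on `ℝ`. By Fubini almost every such line is square integrable, so `ψ` vanishes on
almost every line, and continuity in `(φ, x)` upgrades this to every line.
-/

open MeasureTheory

theorem Real.not_integrable_exp_mul (a : ℝ) : ¬ Integrable (fun θ : ℝ => Real.exp (a * θ)) := by
  intro h
  have hcosh : Integrable (fun θ : ℝ => Real.exp (a * θ) + Real.exp (a * -θ)) :=
    h.add h.comp_neg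
  have hone : Integrable (fun _ : ℝ => (1 : ℝ)) := by
    refine hcosh.mono' aestronglyMeasurable_const (Filter.Eventually.of_forall fun θ => ?_)
    have := Real.add_one_le_exp (a * θ)
    have := Real.add_one_le_exp (a * -θ)
    rw [norm_one]
    linarith
  rw [integrable_const_iff] at hone
  have := hone.resolve_left one_ne_zero
  exact measure_ne_top (volume : Measure ℝ) Set.univ Real.volume_univ

section LinearODE

variable {E : Type*} [NormedAddCommGroup E] [NormedSpace ℂ E] {g : ℝ → E} {c : ℂ}

theorem eq_exp_smul_of_hasDerivAt_smul (hg : ∀ t, HasDerivAt g (c • g t) t) (t : ℝ) :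
    g t = Complex.exp (c * t) • g 0 := by
  have hexp : ∀ s : ℝ,
      HasDerivAt (fun s : ℝ => Complex.exp (-c * s)) (Complex.exp (-c * s) * -c) s :=
    fun s => by simpa using ((hasDerivAt_id s).ofReal_comp.const_mul (-c)).cexp
  have hconst : ∀ s, HasDerivAt (fun s : ℝ => Complex.exp (-c * s) • g s) 0 s := fun s => by
    refine ((hexp s).smul (hg s)).congr_deriv ?_
    rw [smul_smul, ← add_smul, mul_neg, add_neg_cancel, zero_smul]
  have h := is_const_of_deriv_eq_zero (fun s => (hconst s).differentiableAt)
    (fun s => (hconst s).deriv) t 0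
  simp only [Complex.ofReal_zero, mul_zero, Complex.exp_zero, one_smul] at h
  rw [← h, smul_smul, ← Complex.exp_add, neg_mul, add_neg_cancel, Complex.exp_zero, one_smul]

theorem norm_sq_eq_of_hasDerivAt_smul (hg : ∀ t, HasDerivAt g (c • g t) t) (t : ℝ) :
    ‖g t‖ ^ 2 = ‖g 0‖ ^ 2 * Real.exp (2 * c.re * t) := by
  rw [eq_exp_smul_of_hasDerivAt_smul hg t, norm_smul, Complex.norm_exp, mul_pow,
    ← Real.exp_nat_mul]
  simp only [Complex.mul_re, Complex.ofReal_re, Complex.ofReal_im, mul_zero, sub_zero]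
  ring_nf

theorem eq_zero_of_hasDerivAt_smul_of_integrable_norm_sq (hg : ∀ t, HasDerivAt g (c • g t) t)
    (hL2 : Integrable fun t => ‖g t‖ ^ 2) : g = 0 := by
  suffices h0 : g 0 = 0 by
    ext t
    rw [eq_exp_smul_of_hasDerivAt_smul hg t, h0, smul_zero, Pi.zero_apply]
  by_contra h0
  have hpos : 0 < ‖g 0‖ ^ 2 := by positivity
  refine Real.not_integrable_exp_mul (2 * c.re) ((hL2.const_mul (‖g 0‖ ^ 2)⁻¹).congr ?_)
  filter_upwards with t
  rw [norm_sq_eq_of_hasDerivAt_smul hg t, inv_mul_cancel_left₀ hpos.ne']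

end LinearODE

theorem deficiency_indices_opPhi₁_zero_general
    (f : ℝ → ℝ) (κ : ℝ)
    (ε : ℝ)
    (ψ : ℝ × ℝ × ℝ → ℂ) (hψcont : Continuous ψ)
    (hode : ∀ θ φ x : ℝ, HasDerivAt (fun t => ψ (t, φ, x))
      (-(ε : ℂ) * ψ (θ, φ, x) / ((f x : ℝ) * (Real.exp (κ * φ) : ℝ))) θ)
    (hL2 : Integrable (fun q : ℝ × ℝ × ℝ => ‖ψ q‖ ^ 2)) :
    ∀ q : ℝ × ℝ × ℝ, ψ q = 0 := by
  have hslice : ∀ᵐ p : ℝ × ℝ, Integrable fun θ => ‖ψ (θ, p)‖ ^ 2 := by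
    rw [Measure.volume_eq_prod] at hL2
    exact hL2.prod_left_ae
  have hlinear : ∀ p : ℝ × ℝ, ∀ θ, HasDerivAt (fun t => ψ (t, p))
      ((-(ε : ℂ) / ((f p.2 : ℂ) * (Real.exp (κ * p.1) : ℂ))) • ψ (θ, p)) θ :=
    fun p θ => (hode θ p.1 p.2).congr_deriv (by rw [smul_eq_mul, div_mul_eq_mul_div])
  have hslice_zero : ∀ᵐ p : ℝ × ℝ, ∀ θ, ψ (θ, p) = 0 := by
    filter_upwards [hslice] with p hp θ
    exact congrFun (eq_zero_of_hasDerivAt_smul_of_integrable_norm_sq (hlinear p) hp) θ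
  rintro ⟨θ, p⟩
  have hθ : (fun p => ψ (θ, p)) = 0 :=
    (Continuous.ae_eq_iff_eq volume (by fun_prop) continuous_const).1
      (hslice_zero.mono fun p hp => hp θ)
  exact congrFun hθ p

/-- No nonzero `L²` solutions of the deficiency equation `φ̂₁ψ = ±iψ` for the constraint
operator `φ̂₁ = −i f(x)e^{κφ}∂_θ`: if `ψ` is continuous, satisfies
`∂_θψ = −ε ψ/(f(x)e^{κφ})` for `ε = ±1`, and is square integrable on `ℝ³`, then `ψ ≡ 0`.
Hence both deficiency indices of `φ̂₁` are zero. -/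
theorem deficiency_indices_opPhi₁_zero
    (f : ℝ → ℝ) (hf : Continuous f) (hfpos : ∀ x, 0 < f x) (κ : ℝ)
    (ε : ℝ) (hε : ε = 1 ∨ ε = -1)
    (ψ : ℝ × ℝ × ℝ → ℂ) (hψcont : Continuous ψ)
    (hode : ∀ θ φ x : ℝ, HasDerivAt (fun t => ψ (t, φ, x))
      (-(ε : ℂ) * ψ (θ, φ, x) / ((f x : ℝ) * (Real.exp (κ * φ) : ℝ))) θ)
    (hL2 : Integrable (fun q : ℝ × ℝ × ℝ => ‖ψ q‖ ^ 2)) :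
    ∀ q : ℝ × ℝ × ℝ, ψ q = 0 :=
  deficiency_indices_opPhi₁_zero_general f κ ε ψ hψcont hode hL2
end

section
/- Let g : ℝ → ℝ be continuous with g(x) > 0 for all x, and ε ∈ {1, −1}. Suppose ψ : ℝ³ → ℂ is continuous, for every fixed (θ, x) the map φ ↦ ψ(θ, φ, x) is differentiable with ∂_φψ(θ,φ,x) = −ε · ψ(θ,φ,x) / g(x), and ψ is square integrable on ℝ³. Then ψ is identically zero. (Hence the deficiency equation φ̂₂ψ = ±iψ for the constraint operator φ̂₂ = −i g(x)∂_φ has no nonzero L² solutions, so both deficiency indices of φ̂₂ are zero.) -/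
/-!
Along each line in the `φ`-direction the equation is a linear ODE, so
`|ψ(θ, φ, x)| = |ψ(θ, φ₀, x)| · exp (-ε (φ - φ₀) / g x)`. Since `g > 0`, the exponent has the
sign of `-ε (φ - φ₀)`, so `|ψ|` does not decrease along a half-line `H` of directions chosen
independently of `x`. If `ψ(θ₀, φ₀, x₀) ≠ 0`, continuity gives `|ψ| > |ψ(θ₀, φ₀, x₀)| / 2` on
`B(θ₀, δ) × {φ₀} × B(x₀, δ)`, hence on the infinite-measure set `B(θ₀, δ) × H × B(x₀, δ)`,
contradicting `|ψ|² ∈ L¹`.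
-/

open MeasureTheory Metric

theorem eq_mul_exp_of_hasDerivAt_mul_self {f : ℝ → ℂ} {k : ℂ}
    (hf : ∀ t, HasDerivAt f (k * f t) t) (s t : ℝ) :
    f t = f s * Complex.exp (k * (t - s)) := by
  set u : ℝ → ℂ := fun r => f r * Complex.exp (-k * (r - s))
  have hu : ∀ r, HasDerivAt u 0 r := by
    intro r
    have hexp : HasDerivAt (fun r : ℝ => -k * ((r : ℂ) - s)) (-k) r := by
      simpa using ((hasDerivAt_id r).ofReal_comp.sub_const (s : ℂ)).const_mul (-k)
    exact ((hf r).mul hexp.cexp).congr_deriv (by ring)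
  have hconst : u t = u s :=
    is_const_of_deriv_eq_zero (fun r => (hu r).differentiableAt) (fun r => (hu r).deriv) t s
  simp only [u, sub_self, mul_zero, Complex.exp_zero, mul_one] at hconst
  rw [← hconst, mul_assoc, ← Complex.exp_add, neg_mul, neg_add_cancel, Complex.exp_zero, mul_one]

theorem norm_le_norm_of_hasDerivAt_mul_self {f : ℝ → ℂ} {k : ℂ}
    (hf : ∀ t, HasDerivAt f (k * f t) t) {s t : ℝ} (hst : 0 ≤ k.re * (t - s)) :
    ‖f s‖ ≤ ‖f t‖ := by
  have hnorm : ‖f t‖ = ‖f s‖ * Real.exp (k.re * (t - s)) := by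
    rw [eq_mul_exp_of_hasDerivAt_mul_self hf s t, norm_mul, Complex.norm_exp]
    simp
  rw [hnorm]
  exact le_mul_of_one_le_right (norm_nonneg _) (Real.one_le_exp hst)

theorem exists_volume_eq_top_forall_nonneg_mul_sub (c a : ℝ) :
    ∃ H : Set ℝ, volume H = ⊤ ∧ ∀ t ∈ H, 0 ≤ c * (t - a) := by
  rcases le_total 0 c with hc | hc
  · exact ⟨Set.Ici a, Real.volume_Ici, fun t ht => mul_nonneg hc (sub_nonneg.mpr ht)⟩
  · exact ⟨Set.Iic a, Real.volume_Iic, fun t ht => mul_nonneg_of_nonpos_of_nonpos hc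
      (sub_nonpos.mpr ht)⟩

theorem Measure.prod_prod_prod_eq_top {α β γ : Type*} [MeasurableSpace α] [MeasurableSpace β]
    [MeasurableSpace γ] {μ : Measure α} {ν : Measure β} {ρ : Measure γ} [SFinite ν] [SFinite ρ]
    {A : Set α} {B : Set β} {C : Set γ} (hA : μ A ≠ 0) (hB : ν B = ⊤) (hC : ρ C ≠ 0) :
    μ.prod (ν.prod ρ) (A ×ˢ B ×ˢ C) = ⊤ := by
  rw [Measure.prod_prod, Measure.prod_prod, hB, ENNReal.top_mul hC, ENNReal.mul_top hA]

theorem deficiency_indices_opPhi₂_zero_general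
    (g : ℝ → ℝ) (hgpos : ∀ x, 0 < g x)
    (ε : ℝ)
    (ψ : ℝ × ℝ × ℝ → ℂ) (hψcont : Continuous ψ)
    (hode : ∀ θ φ x : ℝ, HasDerivAt (fun t => ψ (θ, t, x))
      (-(ε : ℂ) * ψ (θ, φ, x) / (g x : ℝ)) φ)
    (hL2 : Integrable (fun q : ℝ × ℝ × ℝ => ‖ψ q‖ ^ 2)) :
    ∀ q : ℝ × ℝ × ℝ, ψ q = 0 := by
  rintro ⟨θ₀, φ₀, x₀⟩
  by_contra hψ₀
  set c := ‖ψ (θ₀, φ₀, x₀)‖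
  have hc : 0 < c := norm_pos_iff.mpr hψ₀
  obtain ⟨δ, hδ, hball⟩ := Metric.isOpen_iff.mp (isOpen_lt continuous_const hψcont.norm)
    (θ₀, φ₀, x₀) (half_lt_self hc)
  obtain ⟨H, hH, hHsign⟩ := exists_volume_eq_top_forall_nonneg_mul_sub (-ε) φ₀
  have hgrowth : ∀ θ x, ∀ φ ∈ H, ‖ψ (θ, φ₀, x)‖ ≤ ‖ψ (θ, φ, x)‖ := by
    intro θ x φ hφ
    refine norm_le_norm_of_hasDerivAt_mul_self (f := fun t => ψ (θ, t, x)) (k := ((-ε / g x : ℝ) : ℂ)) (fun t => ?_) ?_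
    · convert hode θ t x using 1
      push_cast
      ring
    · rw [Complex.ofReal_re, div_mul_eq_mul_div]
      exact div_nonneg (hHsign φ hφ) (hgpos x).le
  have hlarge : ball θ₀ δ ×ˢ H ×ˢ ball x₀ δ ⊆ {q | (c / 2) ^ 2 ≤ ‖ψ q‖ ^ 2} := by
    rintro ⟨θ, φ, x⟩ ⟨hθ, hφ, hx⟩
    have hnear : c / 2 < ‖ψ (θ, φ₀, x)‖ :=
      hball (by rw [← ball_prod_same, ← ball_prod_same]; exact ⟨hθ, mem_ball_self hδ, hx⟩)
    exact pow_le_pow_left₀ (by positivity) (hnear.le.trans (hgrowth θ x φ hφ)) 2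
  have hinf : volume (ball θ₀ δ ×ˢ H ×ˢ ball x₀ δ) = ⊤ :=
    Measure.prod_prod_prod_eq_top (by simp [hδ]) hH (by simp [hδ])
  exact (hL2.measure_ge_lt_top (by positivity)).ne (top_unique (hinf ▸ measure_mono hlarge))

/-- No nonzero `L²` solutions of the deficiency equation `φ̂₂ψ = ±iψ` for the constraint
operator `φ̂₂ = −i g(x)∂_φ`: if `ψ` is continuous, satisfies `∂_φψ = −ε ψ/g(x)` for
`ε = ±1`, and is square integrable on `ℝ³`, then `ψ ≡ 0`. Hence both deficiency indices
of `φ̂₂` are zero. -/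
theorem deficiency_indices_opPhi₂_zero
    (g : ℝ → ℝ) (hg : Continuous g) (hgpos : ∀ x, 0 < g x)
    (ε : ℝ) (hε : ε = 1 ∨ ε = -1)
    (ψ : ℝ × ℝ × ℝ → ℂ) (hψcont : Continuous ψ)
    (hode : ∀ θ φ x : ℝ, HasDerivAt (fun t => ψ (θ, t, x))
      (-(ε : ℂ) * ψ (θ, φ, x) / (g x : ℝ)) φ)
    (hL2 : Integrable (fun q : ℝ × ℝ × ℝ => ‖ψ q‖ ^ 2)) :
    ∀ q : ℝ × ℝ × ℝ, ψ q = 0 :=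
  deficiency_indices_opPhi₂_zero_general g hgpos ε ψ hψcont hode hL2
end

section
/- Let ψ : ℝ³ → ℂ be a continuous compactly supported function. Then the group averaging sesquilinear form evaluated on (ψ, ψ) is real and nonnegative; explicitly, ∫_{ℝ²} [ ∫_{ℝ³} conj(ψ(Θ,Ξ,x)) · ψ(Θ + λ¹, Ξ + λ², x) dΘ dΞ dx ] dλ¹ dλ² = ∫_ℝ | ∫_{ℝ²} ψ(Θ,Ξ,x) dΘ dΞ |² dx ≥ 0, so the group averaging map satisfies the positivity axiom of a rigging map. -/
/-!
Integrate over the translation `λ` first: this is Fubini for a continuous compactly supported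
integrand. By translation invariance, `∫ ψ(Θ + λ¹, Ξ + λ², x) dλ` is `F x := ∫ ψ(·, ·, x)`,
independent of `(Θ, Ξ)`, so what remains is `∫ conj ψ(Θ, Ξ, x) F x = ∫ conj (F x) F x dx`.
-/

open MeasureTheory ComplexConjugate

section ParametricIntegral

variable {X Y E : Type*} [TopologicalSpace X] [TopologicalSpace Y] [MeasurableSpace Y]
  [OpensMeasurableSpace Y] [NormedAddCommGroup E] [NormedSpace ℝ E]

theorem continuous_parametric_integral_of_hasCompactSupport
    [FirstCountableTopology X] [LocallyCompactSpace X] [SecondCountableTopologyEither Y E]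
    {μ : Measure Y} [IsLocallyFiniteMeasure μ] {f : X → Y → E}
    (hf : Continuous f.uncurry) (h'f : HasCompactSupport f.uncurry) :
    Continuous fun x => ∫ y, f x y ∂μ := by
  have hK : IsCompact (Prod.snd '' tsupport f.uncurry) := h'f.image continuous_snd
  convert continuous_parametric_integral_of_continuous (μ := μ) hf hK using 2 with x
  refine (setIntegral_eq_integral_of_forall_compl_eq_zero fun y hy => ?_).symm
  exact image_eq_zero_of_notMem_tsupport (f := f.uncurry) (x := (x, y))
    fun hxy => hy ⟨_, hxy, rfl⟩

end ParametricIntegral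

section GroupAveraging

variable {G X 𝕜 : Type*} [TopologicalSpace G] [AddCommGroup G] [IsTopologicalAddGroup G]
  [TopologicalSpace X]

theorem hasCompactSupport_uncurry_mul_translate [R1Space X] {R : Type*} [MulZeroClass R]
    {a b : G × X → R} (ha : HasCompactSupport a) (hb : HasCompactSupport b) :
    HasCompactSupport (Function.uncurry fun (t : G) (z : G × X) => a z * b (z.1 + t, z.2)) := by
  refine HasCompactSupport.intro
    ((hb.isCompact.prod ha.isCompact).image
      (f := fun p : (G × X) × (G × X) => (p.1.1 - p.2.1, p.2)) (by fun_prop)) fun q hq => ?_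
  by_contra hne
  have haq : q.2 ∈ tsupport a := subset_tsupport a (left_ne_zero_of_mul hne)
  have hbq : (q.2.1 + q.1, q.2.2) ∈ tsupport b := subset_tsupport b (right_ne_zero_of_mul hne)
  exact hq ⟨((q.2.1 + q.1, q.2.2), q.2), ⟨hbq, haq⟩, by simp⟩

variable [MeasurableSpace G] [BorelSpace G] [SecondCountableTopology G] [LocallyCompactSpace G]
  [MeasurableSpace X] [OpensMeasurableSpace X] [SecondCountableTopology X]
  [LocallyCompactSpace X] [R1Space X] [RCLike 𝕜]
  (μ : Measure G) [μ.IsAddLeftInvariant] [IsFiniteMeasureOnCompacts μ]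
  (ν : Measure X) [IsFiniteMeasureOnCompacts ν]

theorem integral_integral_conj_mul_translate_eq_integral_norm_sq {φ : G × X → 𝕜}
    (hφ : Continuous φ) (h'φ : HasCompactSupport φ) :
    ∫ t, ∫ z, conj (φ z) * φ (z.1 + t, z.2) ∂(μ.prod ν) ∂μ
      = ((∫ x, ‖∫ g, φ (g, x) ∂μ‖ ^ 2 ∂ν : ℝ) : 𝕜) := by
  have hF : Continuous fun x => ∫ g, φ (g, x) ∂μ :=
    continuous_parametric_integral_of_hasCompactSupport (f := fun x g => φ (g, x))
      (hφ.comp continuous_swap) (h'φ.comp_homeomorph (Homeomorph.prodComm X G))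
  have h'conj : HasCompactSupport fun z => conj (φ z) := h'φ.comp_left (map_zero _)
  calc ∫ t, ∫ z, conj (φ z) * φ (z.1 + t, z.2) ∂(μ.prod ν) ∂μ
      = ∫ z, ∫ t, conj (φ z) * φ (z.1 + t, z.2) ∂μ ∂(μ.prod ν) :=
        integral_integral_swap_of_hasCompactSupport
          (f := fun t z => conj (φ z) * φ (z.1 + t, z.2))
          ((RCLike.continuous_conj.comp (hφ.comp continuous_snd)).mul (hφ.comp (by fun_prop)))
          (hasCompactSupport_uncurry_mul_translate h'conj h'φ)
    _ = ∫ z, conj (φ z) * (∫ g, φ (g, z.2) ∂μ) ∂(μ.prod ν) := by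
        congr 1 with z
        rw [integral_const_mul, integral_add_left_eq_self (fun g => φ (g, z.2))]
    _ = ∫ x, ∫ g, conj (φ (g, x)) * (∫ g', φ (g', x) ∂μ) ∂μ ∂ν :=
        integral_prod_symm _ <| ((RCLike.continuous_conj.comp hφ).mul
          (hF.comp continuous_snd)).integrable_of_hasCompactSupport h'conj.mul_right
    _ = ∫ x, ((‖∫ g, φ (g, x) ∂μ‖ ^ 2 : ℝ) : 𝕜) ∂ν := by
        congr 1 with x
        rw [integral_mul_const, integral_conj, RCLike.conj_mul]
        norm_cast
    _ = ((∫ x, ‖∫ g, φ (g, x) ∂μ‖ ^ 2 ∂ν : ℝ) : 𝕜) := integral_ofReal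

end GroupAveraging

/-- The group averaging sesquilinear form of the two abelianised momentum constraints is
positive semidefinite: evaluated on `(ψ, ψ)` it equals the manifestly nonnegative real
number `∫ |∫ ψ dΘ dΞ|² dx`, so group averaging satisfies the positivity axiom of a
rigging map. -/
theorem group_averaging_positive
    (ψ : ℝ × ℝ × ℝ → ℂ)
    (hψ : Continuous ψ) (hψsupp : HasCompactSupport ψ) :
    ∫ lam : ℝ × ℝ,
        ∫ Q : ℝ × ℝ × ℝ, (starRingEnd ℂ) (ψ Q) * ψ (Q.1 + lam.1, Q.2.1 + lam.2, Q.2.2)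
      = ((∫ x : ℝ, ‖∫ p : ℝ × ℝ, ψ (p.1, p.2, x)‖ ^ 2 : ℝ) : ℂ) ∧
      0 ≤ ∫ x : ℝ, ‖∫ p : ℝ × ℝ, ψ (p.1, p.2, x)‖ ^ 2 := by
  have key := integral_integral_conj_mul_translate_eq_integral_norm_sq volume volume
    (φ := fun z : (ℝ × ℝ) × ℝ => ψ (z.1.1, z.1.2, z.2)) (hψ.comp (by fun_prop))
    (hψsupp.comp_homeomorph (Homeomorph.prodAssoc ℝ ℝ ℝ))
  refine ⟨(integral_congr_ae ?_).trans key, integral_nonneg fun x => by positivity⟩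
  filter_upwards with t
  exact (volume_preserving_prodAssoc.integral_comp' _).symm
end

section
/- Let a be a nonzero real number, b a real number, and u the 2×2 real matrix [[−a, b], [0, 0]] (which satisfies u² = −a·u). Then the convergent matrix power series representing (e^{u/2} − e^{−u/2})/u, namely S := Σ_{n=0}^∞ (1 / (4ⁿ · (2n+1)!)) · u^{2n} (with u⁰ = I), has determinant det(S) = sinh(a/2) / (a/2). This is the ghost-free gauge invariant symmetric measure factor |j₀(u)| appearing in the regularised BRST group averaging formula, and for u built from the structure functions of case (ii) (a = λ²κg(x), b = κg(x)λ¹) it equals sinh(λ²κg(x)/2) / (λ²κg(x)/2). -/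
/-!
The matrix `e = -a⁻¹ • u` is an idempotent with `u² = a² • e`, so every power series in `u²`
is computed by evaluating the scalar series at the two eigenvalues `0` and `a²`:
`S = (1 - e) + σ • e` with `σ = Σ (a²)ⁿ / (4ⁿ (2n+1)!) = sinh (a/2) / (a/2)`.
As `e` is upper triangular with diagonal `(1, 0)`, `det S = σ`.
-/

section IsIdempotentElem

variable {R A : Type*} [CommSemiring R] [Ring A] [Algebra R A] {e : A}

theorem IsIdempotentElem.smul_one_sub_add_smul_pow (he : IsIdempotentElem e) (x y : R)
    (n : ℕ) : (x • (1 - e) + y • e) ^ n = x ^ n • (1 - e) + y ^ n • e := by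
  induction n with
  | zero => simp
  | succ n ih =>
    have hc : IsIdempotentElem (1 - e) := he.one_sub
    have h₁ : (1 - e) * e = 0 := by rw [sub_mul, one_mul, he.eq, sub_self]
    have h₂ : e * (1 - e) = 0 := by rw [mul_sub, mul_one, he.eq, sub_self]
    rw [pow_succ, ih]
    simp only [add_mul, mul_add, smul_mul_smul, hc.eq, he.eq, h₁, h₂, smul_zero, add_zero,
      zero_add, pow_succ]

theorem IsIdempotentElem.smul_pow (he : IsIdempotentElem e) (y : R) (n : ℕ) :
    (y • e) ^ n = (0 : R) ^ n • (1 - e) + y ^ n • e := by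
  simpa using he.smul_one_sub_add_smul_pow 0 y n

variable [TopologicalSpace R] [TopologicalSpace A]
  [ContinuousAdd A] [ContinuousSMul R A]

theorem IsIdempotentElem.hasSum_smul_smul_pow (he : IsIdempotentElem e) {g : ℕ → R} {y s : R}
    (hs : HasSum (fun n ↦ g n * y ^ n) s) :
    HasSum (fun n ↦ g n • (y • e) ^ n) (g 0 • (1 - e) + s • e) := by
  have h₀ : HasSum (fun n ↦ g n * (0 : R) ^ n) (g 0) := by
    convert hasSum_ite_eq 0 (g 0) using 2 with n
    rcases n with _ | n <;> simp
  convert (h₀.smul_const (1 - e)).add (hs.smul_const e) using 2 with n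
  rw [he.smul_pow, smul_add, smul_smul, smul_smul]

end IsIdempotentElem

theorem Real.hasSum_sinh_half_div (x : ℝ) (hx : x ≠ 0) :
    HasSum (fun n : ℕ ↦ 1 / (4 ^ n * Nat.factorial (2 * n + 1) : ℝ) * (x ^ 2) ^ n)
      (sinh (x / 2) / (x / 2)) := by
  refine ((Real.hasSum_sinh (x / 2)).div_const (x / 2)).congr_fun fun n ↦ ?_
  rw [← pow_mul, pow_succ, div_pow, show (4 : ℝ) ^ n = 2 ^ (2 * n) by rw [pow_mul]; norm_num]
  field_simp

/-- The ghost-free gauge invariant symmetric measure factor of the regularised BRST group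
averaging formula: for `u = [[−a, b],[0,0]]` (so `u² = −a·u`), the convergent power
series `S = Σ_{n≥0} u^{2n}/(4ⁿ(2n+1)!)` representing `(e^{u/2} − e^{−u/2})/u` has
determinant `|j₀(u)| = det S = sinh(a/2)/(a/2)`. -/
theorem brst_symmetric_measure_factor
    (a b : ℝ) (ha : a ≠ 0)
    (u : Matrix (Fin 2) (Fin 2) ℝ) (hu : u = !![-a, b; 0, 0]) :
    u ^ 2 = -a • u ∧
      Matrix.det
          (∑' n : ℕ, ((1 : ℝ) / (4 ^ n * Nat.factorial (2 * n + 1))) • u ^ (2 * n))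
        = Real.sinh (a / 2) / (a / 2) := by
  set e : Matrix (Fin 2) (Fin 2) ℝ := !![1, -b / a; 0, 0]
  have he : IsIdempotentElem e := by
    ext i j; fin_cases i <;> fin_cases j <;> simp [e, Matrix.mul_apply]
  have hsq : u ^ 2 = -a • u := by
    subst hu; ext i j; fin_cases i <;> fin_cases j <;> simp [sq, Matrix.mul_apply]
  have hue : u ^ 2 = a ^ 2 • e := by
    subst hu; ext i j; fin_cases i <;> fin_cases j <;> simp [sq, Matrix.mul_apply, e]
    field_simp
  have hS := he.hasSum_smul_smul_pow (Real.hasSum_sinh_half_div a ha)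
  simp only [← hue, ← pow_mul] at hS
  refine ⟨hsq, ?_⟩
  rw [hS.tsum_eq]
  simp [e, Matrix.det_fin_two]
end
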